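/- Let ε > 0 and let m, n be positive integers. Let u⁰ : [0,ε) × ℝ^m → [0,∞) and u = (u¹,…,uⁿ) : [0,ε) × ℝ^m → ℝ^n be smooth maps, and suppose u⁰(x,y) = x·a(x,y) for a smooth function a : [0,ε) × ℝ^m → (0,∞). For x > 0, let A(x,y) be the (n+1)×(m+1) real matrix whose entries are x·(∂u^A/∂x)(x,y)/u⁰(x,y) (for the column indexed by x) and x·(∂u^A/∂y^i)(x,y)/u⁰(x,y) (for the columns indexed by y^1,…,y^m), where u^A ranges over u⁰, u¹, …, uⁿ; this is the matrix of the differential of (u⁰,u) with respect to the frames x∂_x, x∂_{y^i} on the source and X∂_X, X∂_{Y^j} on the target. Then A extends to a smooth matrix-valued function on all of [0,ε) × ℝ^m, and for every y ∈ ℝ^m the extended matrix A(0,y) is injective as a linear map ℝ^{m+1} → ℝ^{n+1} if and only if the ordinary Jacobian matrix of (u⁰,u) at (0,y) is injective. -/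
import Mathlib


open Set Function

noncomputable section

/-- For a smooth simple b-map `(u⁰, u)` between half-spaces, written in
coordinates with `u⁰(x,y) = x·a(x,y)` for a smooth positive `a`, the rescaled Jacobian
`A = (x/u⁰)·J` (the matrix of the 0-differential with respect to the 0-frames
`x∂_x, x∂_{yⁱ}` and `X∂_X, X∂_{Yʲ}`) extends smoothly up to the boundary `x = 0`, and the
extended matrix at `(0,y)` is injective if and only if the ordinary Jacobian at `(0,y)` is. -/
theorem zero_differential_extends_and_injectivity
    {ε : ℝ} (hε : 0 < ε) {m n : ℕ} (hm : 0 < m) (hn : 0 < n)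
    (u : ℝ × EuclideanSpace ℝ (Fin m) → ℝ × EuclideanSpace ℝ (Fin n))
    (a : ℝ × EuclideanSpace ℝ (Fin m) → ℝ)
    (D : Set (ℝ × EuclideanSpace ℝ (Fin m)))
    (hD : D = {p : ℝ × EuclideanSpace ℝ (Fin m) | 0 ≤ p.1 ∧ p.1 < ε})
    (hu : ContDiffOn ℝ (⊤ : ℕ∞) u D)
    (hu0 : ∀ p ∈ D, 0 ≤ (u p).1)
    (ha : ContDiffOn ℝ (⊤ : ℕ∞) a D) (hapos : ∀ p ∈ D, 0 < a p)
    (hua : ∀ p ∈ D, (u p).1 = p.1 * a p) :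
    ∃ A : ℝ × EuclideanSpace ℝ (Fin m) →
        (ℝ × EuclideanSpace ℝ (Fin m)) →L[ℝ] ℝ × EuclideanSpace ℝ (Fin n),
      ContDiffOn ℝ (⊤ : ℕ∞) A D ∧
      (∀ p ∈ D, 0 < p.1 →
        A p = (p.1 / (u p).1) • fderivWithin ℝ u D p) ∧
      ∀ y : EuclideanSpace ℝ (Fin m),
        (Function.Injective (A (0, y)) ↔
          Function.Injective (fderivWithin ℝ u D (0, y))) := by
  -- The candidate extension.
  refine ⟨fun p => (a p)⁻¹ • fderivWithin ℝ u D p, ?_, ?_, ?_⟩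
  case _ =>
    -- smoothness
    have hconv : Convex ℝ D := by
      rw [hD]
      intro p hp q hq s t hs ht hst
      constructor
      · exact add_nonneg (mul_nonneg hs hp.1) (mul_nonneg ht hq.1)
      · calc s * p.1 + t * q.1 < s * ε + t * ε := by
              rcases eq_or_lt_of_le hs with rfl | hs'
              · simp only [zero_mul, zero_add]
                have ht' : 0 < t := by linarith
                exact (mul_lt_mul_iff_right₀ ht').2 hq.2
              · rcases eq_or_lt_of_le ht with rfl | ht'
                · simp only [zero_mul, add_zero]
                  exact (mul_lt_mul_iff_right₀ hs').2 hp.2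
                · exact add_lt_add ((mul_lt_mul_iff_right₀ hs').2 hp.2)
                    ((mul_lt_mul_iff_right₀ ht').2 hq.2)
        _ = ε := by rw [← add_mul, hst, one_mul]
    have hne : (interior D).Nonempty := by
      refine ⟨(ε / 2, 0), ?_⟩
      have hopen : IsOpen {p : ℝ × EuclideanSpace ℝ (Fin m) | 0 < p.1 ∧ p.1 < ε} := by
        have : {p : ℝ × EuclideanSpace ℝ (Fin m) | 0 < p.1 ∧ p.1 < ε}
            = Prod.fst ⁻¹' Ioo 0 ε := rfl
        rw [this]
        exact isOpen_Ioo.preimage continuous_fst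
      have hsub : {p : ℝ × EuclideanSpace ℝ (Fin m) | 0 < p.1 ∧ p.1 < ε} ⊆ D := by
        rw [hD]; exact fun p hp => ⟨le_of_lt hp.1, hp.2⟩
      exact interior_maximal hsub hopen ⟨by positivity, by linarith⟩
    have hUD : UniqueDiffOn ℝ D := uniqueDiffOn_convex hconv hne
    have hfd : ContDiffOn ℝ (⊤ : ℕ∞) (fun p => fderivWithin ℝ u D p) D :=
      hu.fderivWithin hUD (by simp)
    have hainv : ContDiffOn ℝ (⊤ : ℕ∞) (fun p => (a p)⁻¹) D :=
      ha.inv fun p hp => (hapos p hp).ne'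
    exact hainv.smul hfd
  case _ =>
    intro p hp hx
    have hap : a p ≠ 0 := (hapos p hp).ne'
    have : p.1 / (u p).1 = (a p)⁻¹ := by
      rw [hua p hp]
      field_simp
    rw [this]
  case _ =>
    intro y
    have h0 : ((0 : ℝ), y) ∈ D := by rw [hD]; exact ⟨le_refl 0, hε⟩
    have hap : a (0, y) ≠ 0 := (hapos _ h0).ne'
    constructor
    · intro h v w hvw
      apply h
      simp only [ContinuousLinearMap.smul_apply, hvw]
    · intro h v w hvw
      apply h
      simp only [ContinuousLinearMap.smul_apply] at hvw
      exact smul_right_injective _ (inv_ne_zero hap) hvw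

end
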